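/- arXiv:2605.14149 — 2 statements merged into one kernel-verified Lean document; each statement's English description precedes it below -/
import Mathlib

section
/- Let U₁,…,Uₙ be i.i.d. real random variables with E[Uᵢ] = 0 and E[Uᵢ²] ≤ 1, and let |U|₂ = (∑ᵢ Uᵢ²)^{1/2}. Then E[((|U|₂ - √n)₊)²] ≤ 2·Var(U₁²) ≤ 2·E[U₁⁴], where x₊ = max(x,0). -/
/-!
Write `S = ∑ i, U i ^ 2`. Since `E[S] = n E[U₁²] ≤ n` and `√S + √n ≥ 2√n`,
pointwise `(√S - √n)₊ ≤ (S - n)₊ / (2√n) ≤ |S - E[S]| / (2√n)`. Squaring and integrating gives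
`E[(√S - √n)₊²] ≤ Var(S) / (4n) = Var(U₁²) / 4`, since the `U i ^ 2` are independent and
identically distributed. The second inequality is `Var(U₁²) ≤ E[U₁⁴]`.
-/

open MeasureTheory ProbabilityTheory

lemma sq_max_sqrt_sub_sqrt_le {a b c : ℝ} (ha : 0 ≤ a) (hb : 0 < b) (hcb : c ≤ b) :
    max (√a - √b) 0 ^ 2 ≤ (a - c) ^ 2 / (4 * b) := by
  rcases le_total a b with hab | hba
  · rw [max_eq_right (sub_nonpos.2 (Real.sqrt_le_sqrt hab)), zero_pow two_ne_zero]
    positivity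
  have hsqrt : √b ≤ √a := Real.sqrt_le_sqrt hba
  rw [max_eq_left (sub_nonneg.2 hsqrt), le_div_iff₀ (by positivity)]
  have hprod : (√a - √b) * (√a + √b) = a - b := by
    linear_combination Real.sq_sqrt ha - Real.sq_sqrt hb.le
  have hsum : 4 * b ≤ (√a + √b) ^ 2 := by
    nlinarith [Real.sq_sqrt hb.le, Real.sqrt_nonneg b]
  calc (√a - √b) ^ 2 * (4 * b) ≤ (√a - √b) ^ 2 * (√a + √b) ^ 2 := by gcongr
    _ = (a - b) ^ 2 := by rw [← mul_pow, hprod]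
    _ ≤ (a - c) ^ 2 := by gcongr

section

variable {Ω : Type*} {mΩ : MeasurableSpace Ω} {μ : Measure Ω}

lemma integral_sq_max_sqrt_sub_sqrt_le [IsProbabilityMeasure μ] {S : Ω → ℝ}
    (hS : MemLp S 2 μ) (hS0 : ∀ ω, 0 ≤ S ω) {b : ℝ} (hb : 0 < b) (hmean : μ[S] ≤ b) :
    ∫ ω, max (√(S ω) - √b) 0 ^ 2 ∂μ ≤ Var[S; μ] / (4 * b) := by
  have hint : Integrable (fun ω => (S ω - μ[S]) ^ 2) μ :=
    (hS.sub (memLp_const _)).integrable_sq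
  calc ∫ ω, max (√(S ω) - √b) 0 ^ 2 ∂μ ≤ ∫ ω, (S ω - μ[S]) ^ 2 / (4 * b) ∂μ :=
        integral_mono_of_nonneg (ae_of_all _ fun _ => by positivity) (hint.div_const _)
          (ae_of_all _ fun ω => sq_max_sqrt_sub_sqrt_le (hS0 ω) hb hmean)
    _ = Var[S; μ] / (4 * b) := by
        rw [integral_div, variance_eq_integral hS.aemeasurable]

variable {ι : Type*} [Fintype ι] {X : ι → Ω → ℝ} {j : ι}

lemma integral_sum_of_identDistrib (hX : ∀ i, Integrable (X i) μ)
    (hident : ∀ i, IdentDistrib (X i) (X j) μ μ) :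
    ∫ ω, ∑ i, X i ω ∂μ = Fintype.card ι * ∫ ω, X j ω ∂μ := by
  simp_rw [integral_finsetSum _ fun i _ => hX i, (hident _).integral_eq, Finset.sum_const,
    nsmul_eq_mul, Finset.card_univ]

lemma variance_sum_of_identDistrib (hX : ∀ i, MemLp (X i) 2 μ)
    (hindep : Pairwise fun i k => X i ⟂ᵢ[μ] X k)
    (hident : ∀ i, IdentDistrib (X i) (X j) μ μ) :
    Var[∑ i, X i; μ] = Fintype.card ι * Var[X j; μ] := by
  rw [IndepFun.variance_sum (fun i _ => hX i) fun i _ k _ hik => hindep hik]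
  simp_rw [(hident _).variance_eq, Finset.sum_const, nsmul_eq_mul, Finset.card_univ]

end

theorem stmt1_general {Ω : Type*} [MeasureSpace Ω] [IsProbabilityMeasure (ℙ : Measure Ω)]
    {n : ℕ} (hn : 0 < n) (U : Fin n → Ω → ℝ)
    (hmeas : ∀ i, Measurable (U i))
    (hindep : iIndepFun U ℙ)
    (hident : ∀ i, Measure.map (U i) ℙ = Measure.map (U ⟨0, hn⟩) ℙ)
    (hvar : ∀ i, ∫ ω, (U i ω) ^ 2 ≤ 1)
    (hL4 : ∀ i, Integrable (fun ω => (U i ω) ^ 4)) :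
    (∫ ω, max (Real.sqrt (∑ i, (U i ω) ^ 2) - Real.sqrt n) 0 ^ 2)
        ≤ 2 * variance (fun ω => (U ⟨0, hn⟩ ω) ^ 2) ℙ ∧
      2 * variance (fun ω => (U ⟨0, hn⟩ ω) ^ 2) ℙ ≤ 2 * ∫ ω, (U ⟨0, hn⟩ ω) ^ 4 := by
  set i₀ : Fin n := ⟨0, hn⟩
  set X : Fin n → Ω → ℝ := fun i ω => U i ω ^ 2
  have hX : ∀ i, MemLp (X i) 2 := fun i =>
    (memLp_two_iff_integrable_sq ((hmeas i).pow_const 2).aestronglyMeasurable).2 <| by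
      simpa only [← pow_mul] using hL4 i
  have hXident : ∀ i, IdentDistrib (X i) (X i₀) ℙ ℙ := fun i =>
    (⟨(hmeas i).aemeasurable, (hmeas i₀).aemeasurable, hident i⟩ : IdentDistrib _ _ ℙ ℙ).comp
      (measurable_id.pow_const 2)
  have hXindep : Pairwise fun i k => X i ⟂ᵢ[ℙ] X k := fun i k hik =>
    (hindep.indepFun hik).comp (measurable_id.pow_const 2) (measurable_id.pow_const 2)
  have hsum : (fun ω => ∑ i, X i ω) = ∑ i, X i := (Finset.sum_fn _ _).symm
  have hn' : (0 : ℝ) < n := Nat.cast_pos.2 hn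
  have hmean : ∫ ω, ∑ i, X i ω ≤ n := by
    rw [integral_sum_of_identDistrib (fun i => (hX i).integrable one_le_two) hXident,
      Fintype.card_fin]
    exact mul_le_of_le_one_right hn'.le (hvar i₀)
  refine ⟨?_, ?_⟩
  · calc ∫ ω, max (√(∑ i, X i ω) - √n) 0 ^ 2
        ≤ Var[fun ω => ∑ i, X i ω; ℙ] / (4 * n) :=
          integral_sq_max_sqrt_sub_sqrt_le (hsum ▸ memLp_finsetSum' _ fun i _ => hX i)
            (fun ω => by positivity) hn' hmean
      _ = Var[X i₀; ℙ] / 4 := by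
          rw [hsum, variance_sum_of_identDistrib hX hXindep hXident, Fintype.card_fin]
          field_simp
      _ ≤ 2 * Var[X i₀; ℙ] := by linarith [variance_nonneg (X i₀) ℙ]
  · grw [variance_le_expectation_sq (hX i₀).aestronglyMeasurable]
    simp only [X, Pi.pow_apply, ← pow_mul, le_refl]

theorem stmt1 {Ω : Type*} [MeasureSpace Ω] [IsProbabilityMeasure (ℙ : Measure Ω)]
    {n : ℕ} (hn : 0 < n) (U : Fin n → Ω → ℝ)
    (hmeas : ∀ i, Measurable (U i))
    (hindep : iIndepFun U ℙ)
    (hident : ∀ i, Measure.map (U i) ℙ = Measure.map (U ⟨0, hn⟩) ℙ)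
    (hmean : ∀ i, ∫ ω, U i ω = 0)
    (hvar : ∀ i, ∫ ω, (U i ω) ^ 2 ≤ 1)
    (hL4 : ∀ i, Integrable (fun ω => (U i ω) ^ 4)) :
    (∫ ω, max (Real.sqrt (∑ i, (U i ω) ^ 2) - Real.sqrt n) 0 ^ 2)
        ≤ 2 * variance (fun ω => (U ⟨0, hn⟩ ω) ^ 2) ℙ ∧
      2 * variance (fun ω => (U ⟨0, hn⟩ ω) ^ 2) ℙ ≤ 2 * ∫ ω, (U ⟨0, hn⟩ ω) ^ 4 :=
  stmt1_general hn U hmeas hindep hident hvar hL4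
end

section
/- Fix p ≥ 2, t ∈ [0,1), K > 0, and set r = 2√(p(1-t)·log(4K^{-2}/(1-t))), assuming 4K^{-2}/(1-t) ≥ e and (K/2)^p ≤ 1/4. Define h: ℝ → [0,1] by h(x) = 1 for |x| ≤ r/2, h(x) = (r/2)^{-1}(r - |x|) for r/2 ≤ |x| ≤ r, and h(x) = 0 for |x| > r. Then ‖h'‖_{L^p(γ_{1-t})} ≤ K·‖h‖_{L^p(γ_{1-t})}, where γ_v is the centered Gaussian measure on ℝ with variance v. -/
/-!
Both sides are controlled by the Gaussian tail `τ = γ_{1-t}(|x| > r/2)`: `h = 1` and `h' = 0` on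
`|x| ≤ r/2`, while `|h| ≤ 1` and `|h'| ≤ 2/r` everywhere. The level `r/2 = √(p(1-t) log B⁻²)`,
with `B = K√(1-t)/2`, is chosen so that the Chernoff bound reads
`τ ≤ 2 exp(-(r/2)²/(2(1-t))) = 2Bᵖ`. Hence `‖h‖ₚᵖ ≥ 1 - 2(K/2)ᵖ ≥ 1/2`, while `r/2 ≥ √(2(1-t))`
gives `‖h'‖ₚᵖ ≤ 2(2B/r)ᵖ ≤ 2(K/√8)ᵖ ≤ Kᵖ/4`.
-/

open MeasureTheory ProbabilityTheory Real Set
open scoped NNReal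

lemma hasSubgaussianMGF_sub_gaussianReal (μ : ℝ) (v : ℝ≥0) :
    HasSubgaussianMGF (fun x ↦ x - μ) v (gaussianReal μ v) := by
  have hX : (gaussianReal μ v).map (· - μ) = gaussianReal 0 v := by
    rw [gaussianReal_map_sub_const, sub_self]
  refine ⟨fun t ↦ ?_, fun t ↦ by simp [mgf_gaussianReal hX]⟩
  rw [← mgf_pos_iff, mgf_gaussianReal hX]
  exact exp_pos _

lemma gaussianReal_measureReal_lt_abs_sub_le (μ : ℝ) (v : ℝ≥0) {a : ℝ} (ha : 0 ≤ a) :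
    (gaussianReal μ v).real {x | a < |x - μ|} ≤ 2 * exp (-a ^ 2 / (2 * v)) := by
  have hX := hasSubgaussianMGF_sub_gaussianReal μ v
  calc (gaussianReal μ v).real {x | a < |x - μ|}
      ≤ (gaussianReal μ v).real ({x | a ≤ x - μ} ∪ {x | a ≤ -(x - μ)}) := by
        refine measureReal_mono fun x (hx : a < |x - μ|) ↦ ?_
        rcases le_abs'.mp hx.le with h | h
        · exact Or.inr (le_neg.mpr h)
        · exact Or.inl h
    _ ≤ (gaussianReal μ v).real {x | a ≤ x - μ} + (gaussianReal μ v).real {x | a ≤ -(x - μ)} :=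
        measureReal_union_le _ _
    _ ≤ 2 * exp (-a ^ 2 / (2 * v)) := by
        rw [two_mul]
        exact add_le_add (hX.measure_ge_le ha) (hX.neg.measure_ge_le ha)

lemma gaussianReal_measureReal_sqrt_lt_abs_le {p B : ℝ} {v : ℝ≥0} (hv : 0 < v) (hB : 0 < B)
    (h : 0 ≤ p * v * log (B ^ 2)⁻¹) :
    (gaussianReal 0 v).real {x | √(p * v * log (B ^ 2)⁻¹) < |x|} ≤ 2 * B ^ p := by
  have hexp : exp (-√(p * v * log (B ^ 2)⁻¹) ^ 2 / (2 * v)) = B ^ p := by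
    rw [sq_sqrt h, rpow_def_of_pos hB, log_inv, log_pow]
    congr 1
    field_simp
    push_cast
    ring
  have := gaussianReal_measureReal_lt_abs_sub_le 0 v (sqrt_nonneg (p * v * log (B ^ 2)⁻¹))
  simp only [sub_zero] at this
  rwa [hexp] at this

noncomputable def tent (r x : ℝ) : ℝ :=
  if |x| ≤ r / 2 then 1 else if |x| ≤ r then (r / 2)⁻¹ * (r - |x|) else 0

noncomputable def tentDeriv (r x : ℝ) : ℝ :=
  if r / 2 < |x| ∧ |x| < r then -sign x * (r / 2)⁻¹ else 0

section Tent

variable {r : ℝ}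

lemma measurable_tent (r : ℝ) : Measurable (tent r) :=
  Measurable.ite (measurableSet_le measurable_abs measurable_const) measurable_const <|
    Measurable.ite (measurableSet_le measurable_abs measurable_const)
      ((measurable_const.sub measurable_abs).const_mul _) measurable_const

lemma tent_eq_one {x : ℝ} (hx : |x| ≤ r / 2) : tent r x = 1 := if_pos hx

lemma abs_tent_le_one (hr : 0 ≤ r) (x : ℝ) : |tent r x| ≤ 1 := by
  unfold tent
  split_ifs with h₁ h₂
  · simp
  · rw [abs_of_nonneg (mul_nonneg (by positivity) (by linarith)), inv_mul_le_iff₀ (by linarith)]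
    linarith
  · simp

lemma tentDeriv_eq_zero {x : ℝ} (hx : |x| ≤ r / 2) : tentDeriv r x = 0 :=
  if_neg fun h ↦ (h.1.trans_le hx).false

lemma abs_tentDeriv_le (hr : 0 ≤ r) (x : ℝ) : |tentDeriv r x| ≤ (r / 2)⁻¹ := by
  unfold tentDeriv
  split_ifs
  · rw [abs_mul, abs_neg, abs_of_nonneg (by positivity : 0 ≤ (r / 2)⁻¹)]
    refine mul_le_of_le_one_left (by positivity) ?_
    rcases sign_apply_eq x with h | h | h <;> simp [h]
  · rw [abs_zero]; positivity

variable {μ : Measure ℝ} {p : ℝ}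

lemma integral_abs_tentDeriv_rpow_le [IsFiniteMeasure μ] (hr : 0 ≤ r) (hp : 0 < p) :
    ∫ x, |tentDeriv r x| ^ p ∂μ ≤ (r / 2)⁻¹ ^ p * μ.real {x | r / 2 < |x|} := by
  have hs : MeasurableSet {x : ℝ | r / 2 < |x|} := measurableSet_lt measurable_const measurable_abs
  rw [mul_comm, ← smul_eq_mul, ← integral_indicator_const _ hs]
  refine integral_mono_of_nonneg (.of_forall fun x ↦ by positivity)
    ((integrable_const _).indicator hs) (.of_forall fun x ↦ ?_)
  by_cases hx : r / 2 < |x|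
  · simpa [hx] using rpow_le_rpow (abs_nonneg _) (abs_tentDeriv_le hr x) hp.le
  · simp [hx, tentDeriv_eq_zero (not_lt.mp hx), zero_rpow hp.ne']

lemma one_sub_measureReal_le_integral_abs_tent_rpow [IsProbabilityMeasure μ] (hr : 0 ≤ r)
    (hp : 0 ≤ p) : 1 - μ.real {x | r / 2 < |x|} ≤ ∫ x, |tent r x| ^ p ∂μ := by
  have hs : MeasurableSet {x : ℝ | |x| ≤ r / 2} := measurableSet_le measurable_abs measurable_const
  have hcompl : {x : ℝ | r / 2 < |x|} = {x | |x| ≤ r / 2}ᶜ := by ext; simp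
  rw [hcompl, measureReal_compl hs, probReal_univ, sub_sub_cancel, ← mul_one (μ.real _),
    ← smul_eq_mul, ← integral_indicator_const _ hs]
  have hint : Integrable (fun x ↦ |tent r x| ^ p) μ :=
    .of_bound ((measurable_tent r).abs.pow_const p).aestronglyMeasurable 1
      (.of_forall fun x ↦ by
        rw [norm_of_nonneg (by positivity)]
        exact rpow_le_one (abs_nonneg _) (abs_tent_le_one hr x) hp)
  refine integral_mono ((integrable_const _).indicator hs) hint fun x ↦ ?_
  by_cases hx : |x| ≤ r / 2
  · simp [hx, tent_eq_one hx]
  · simp [hx]; positivity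

end Tent

lemma inv_sqrt_rpow_mul_rpow_le {p v L K : ℝ} (hp : 2 ≤ p) (hv : 0 < v) (hL : 1 ≤ L)
    (hK : 0 ≤ K) : (√(p * v * L))⁻¹ ^ p * (K * √v / 2) ^ p ≤ K ^ p / 8 := by
  have h8 : (√8) ^ 2 = 8 := sq_sqrt (by norm_num)
  have hsqrt : √8 * √v ≤ 2 * √(p * v * L) := by
    rw [← sqrt_mul (by norm_num), sqrt_le_iff, mul_pow, sq_sqrt (by positivity)]
    exact ⟨by positivity, by nlinarith [mul_le_mul_of_nonneg_left hL (by positivity : 0 ≤ p * v)]⟩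
  have hbase : (√(p * v * L))⁻¹ * (K * √v / 2) ≤ K / √8 := by
    have : 0 < √(p * v * L) := sqrt_pos.mpr (by positivity)
    rw [inv_mul_eq_div, div_div, div_le_div_iff₀ (by positivity) (by positivity)]
    nlinarith [mul_le_mul_of_nonneg_left hsqrt hK]
  calc (√(p * v * L))⁻¹ ^ p * (K * √v / 2) ^ p
      = ((√(p * v * L))⁻¹ * (K * √v / 2)) ^ p := (mul_rpow (by positivity) (by positivity)).symm
    _ ≤ (K / √8) ^ p := rpow_le_rpow (by positivity) hbase (by linarith)
    _ = K ^ p / √8 ^ p := div_rpow hK (by positivity) p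
    _ ≤ K ^ p / 8 := by
        refine div_le_div_of_nonneg_left (by positivity) (by norm_num) ?_
        calc (8 : ℝ) = √8 ^ (2 : ℝ) := by rw [rpow_two, h8]
          _ ≤ √8 ^ p := rpow_le_rpow_of_exponent_le (one_le_sqrt.mpr (by norm_num)) hp

lemma rpow_one_div_le_mul_rpow_one_div {p K I J : ℝ} (hp : 0 < p) (hK : 0 ≤ K) (hI : 0 ≤ I)
    (hJ : 0 ≤ J) (h : I ≤ K ^ p * J) : I ^ (1 / p) ≤ K * J ^ (1 / p) :=
  calc I ^ (1 / p) ≤ (K ^ p * J) ^ (1 / p) := rpow_le_rpow hI h (by positivity)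
    _ = K * J ^ (1 / p) := by rw [mul_rpow (by positivity) hJ, one_div, rpow_rpow_inv hK hp.ne']

theorem stmt4 (p t K : ℝ) (hp : 2 ≤ p) (ht0 : 0 ≤ t) (ht1 : t < 1) (hK : 0 < K)
    (hbig : Real.exp 1 ≤ 4 / K ^ 2 / (1 - t)) (hsmall : (K / 2) ^ p ≤ 1 / 4) :
    let r := 2 * Real.sqrt (p * (1 - t) * Real.log (4 / K ^ 2 / (1 - t)))
    let h : ℝ → ℝ := fun x =>
      if |x| ≤ r / 2 then 1 else if |x| ≤ r then (r / 2)⁻¹ * (r - |x|) else 0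
    let h' : ℝ → ℝ := fun x =>
      if r / 2 < |x| ∧ |x| < r then -(Real.sign x) * (r / 2)⁻¹ else 0
    (∫ x, |h' x| ^ p ∂(gaussianReal 0 (Real.toNNReal (1 - t)))) ^ (1 / p)
      ≤ K * (∫ x, |h x| ^ p ∂(gaussianReal 0 (Real.toNNReal (1 - t)))) ^ (1 / p) := by
  intro r h h'
  show (∫ x, |tentDeriv r x| ^ p ∂_) ^ (1 / p) ≤ K * (∫ x, |tent r x| ^ p ∂_) ^ (1 / p)
  have hv : 0 < 1 - t := by linarith
  set B := K * √(1 - t) / 2 with hB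
  have hB0 : 0 < B := by positivity
  have hA : 4 / K ^ 2 / (1 - t) = (B ^ 2)⁻¹ := by
    rw [hB, div_pow, mul_pow, sq_sqrt hv.le]; field_simp; norm_num
  have hlog : 1 ≤ log (B ^ 2)⁻¹ := by rwa [← hA, le_log_iff_exp_le (by positivity)]
  have ha : r / 2 = √(p * (1 - t) * log (B ^ 2)⁻¹) := by rw [← hA]; simp only [r]; ring
  have hr : 0 ≤ r := by linarith [ha ▸ sqrt_nonneg _]
  have htail : (gaussianReal 0 (1 - t).toNNReal).real {x | r / 2 < |x|} ≤ 2 * B ^ p := by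
    have := gaussianReal_measureReal_sqrt_lt_abs_le (v := (1 - t).toNNReal) (p := p)
      (by simpa using hv) hB0 (by rw [coe_toNNReal _ hv.le]; positivity)
    rwa [coe_toNNReal _ hv.le, ← ha] at this
  have hBK : B ≤ K / 2 := by
    rw [hB]; gcongr; exact mul_le_of_le_one_right hK.le (sqrt_le_one.mpr (by linarith))
  have hBp : B ^ p ≤ 1 / 4 := (rpow_le_rpow hB0.le hBK (by linarith)).trans hsmall
  have hupper : ∫ x, |tentDeriv r x| ^ p ∂(gaussianReal 0 (1 - t).toNNReal) ≤ K ^ p / 4 :=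
    calc _ ≤ (r / 2)⁻¹ ^ p * (2 * B ^ p) :=
          (integral_abs_tentDeriv_rpow_le hr (by linarith)).trans (by gcongr)
      _ = 2 * ((r / 2)⁻¹ ^ p * B ^ p) := by ring
      _ ≤ 2 * (K ^ p / 8) := by
          rw [ha]; gcongr; exact inv_sqrt_rpow_mul_rpow_le hp hv hlog hK.le
      _ = K ^ p / 4 := by ring
  have hlower : 1 / 2 ≤ ∫ x, |tent r x| ^ p ∂(gaussianReal 0 (1 - t).toNNReal) := by
    linarith [one_sub_measureReal_le_integral_abs_tent_rpow
      (μ := gaussianReal 0 (1 - t).toNNReal) (p := p) hr (by linarith)]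
  refine rpow_one_div_le_mul_rpow_one_div (by linarith) hK.le
    (integral_nonneg fun x ↦ by positivity) (by linarith) ?_
  nlinarith [rpow_nonneg hK.le p]
end
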